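/- Let μ ∈ M_1(Δ), and for each k large enough that μ(Δ ∩ K_k) > 0, where K_k = {x ∈ ℂ : |Re x| ≤ k and |Im x| ≤ k}, let μ_k be the normalized restriction of μ to Δ ∩ K_k. Then μ_k converges weakly to μ as k → ∞, and lim_{k→∞} I_V(μ_k) = I_V(μ). -/

import Mathlib

/-!
The sets `Δ ∩ K_k` increase to `Δ`, which carries `μ`, so by monotone convergence
`∫⁻ g ∂μ[|Δ ∩ K_k] → ∫⁻ g ∂μ` for every `g ≥ 0`, measurable or not; for bounded continuous `g`
this is weak convergence. Since `μ_k ⊗ μ_k` is `μ ⊗ μ` conditioned on `(Δ ∩ K_k) ×ˢ (Δ ∩ K_k)`,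
the positive and negative parts of the energy converge in the same way. The growth condition
makes `β log (1 + |x|) - V x` bounded above on `Δ`, and `|x - y| ≤ (1 + |x|)(1 + |y|)` turns this
into a lower bound for `F_V` on `Δ × Δ`; so the negative part of `I_V(μ)` is finite and the
difference of the two parts converges in `EReal`.
-/

open MeasureTheory Filter Topology
open scoped ENNReal NNReal

/-- `⊤`-aware positive part of an extended real, as a value in `ℝ≥0∞`. -/
noncomputable def EReal.posPart' (x : EReal) : ℝ≥0∞ :=
  if x = ⊤ then ⊤ else ENNReal.ofReal x.toReal

/-- Integral of an `EReal`-valued function: positive part minus negative part. -/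
noncomputable def eIntegral {α : Type*} [MeasurableSpace α] (μ : Measure α) (f : α → EReal) :
    EReal :=
  ((∫⁻ x, (f x).posPart' ∂μ : ℝ≥0∞) : EReal) - ((∫⁻ x, (-(f x)).posPart' ∂μ : ℝ≥0∞) : EReal)

/-- `log (1/r)` as an extended real, equal to `+∞` at `r = 0`. -/
noncomputable def negLog (r : ℝ) : EReal :=
  if r = 0 then ⊤ else ((- Real.log r : ℝ) : EReal)

/-- The weighted logarithmic kernel `F_W(x,y) = (β/2) log(1/|x-y|) + W(x)/2 + W(y)/2`. -/
noncomputable def kern {α : Type*} [PseudoMetricSpace α] (β : ℝ) (W : α → EReal) (x y : α) :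
    EReal :=
  ((β / 2 : ℝ) : EReal) * negLog (dist x y) + ((2⁻¹ : ℝ) : EReal) * W x
    + ((2⁻¹ : ℝ) : EReal) * W y

/-- The weighted logarithmic energy `I_W(μ) = ∬ F_W(x,y) dμ(x) dμ(y)`. -/
noncomputable def energy {α : Type*} [MeasurableSpace α] [PseudoMetricSpace α] (β : ℝ)
    (W : α → EReal) (μ : Measure α) : EReal :=
  eIntegral (μ.prod μ) (fun p => kern β W p.1 p.2)

/-- The set of (Borel) probability measures carried by the closed set `Δ`,
i.e. `M_1(Δ)` viewed inside the probability measures on the ambient space. -/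
def M1 {α : Type*} [MeasurableSpace α] [TopologicalSpace α]
    (Δ : Set α) : Set (ProbabilityMeasure α) :=
  {μ | (μ : Measure α) Δᶜ = 0}

/-- The filter `|x| → ∞, x ∈ Δ`. -/
noncomputable def atComplexInftyWithin (Δ : Set ℂ) : Filter ℂ :=
  (Filter.comap (fun x : ℂ => ‖x‖) Filter.atTop) ⊓ Filter.principal Δ

/-- The weak growth assumption : `liminf_{|x| → ∞, x ∈ Δ} (V(x) - β' log |x|) > -∞`
for some `β' > 1` with `β' ≥ β`. -/
def WeakGrowth (β : ℝ) (Δ : Set ℂ) (V : ℂ → ℝ) : Prop :=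
  ∃ β' : ℝ, 1 < β' ∧ β ≤ β' ∧
    (⊥ : EReal) <
      Filter.liminf (fun x : ℂ => ((V x - β' * Real.log ‖x‖ : ℝ) : EReal))
        (atComplexInftyWithin Δ)

/-- The square `K_k = {x : |Re x| ≤ k, |Im x| ≤ k}`. -/
def Ksq (k : ℕ) : Set ℂ := {x : ℂ | |x.re| ≤ (k : ℝ) ∧ |x.im| ≤ (k : ℝ)}

open scoped ProbabilityTheory

section Conditioning

variable {α : Type*} [MeasurableSpace α]

theorem tendsto_lintegral_cond_of_monotone {μ : Measure α} [IsProbabilityMeasure μ]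
    {A : ℕ → Set α} (hA : Monotone A) (hcover : ∀ᵐ x ∂μ, x ∈ ⋃ k, A k) (g : α → ℝ≥0∞) :
    Tendsto (fun k => ∫⁻ x, g x ∂μ[|A k]) atTop (𝓝 (∫⁻ x, g x ∂μ)) := by
  have hrestrict : μ.restrict (⋃ k, A k) = μ := Measure.restrict_eq_self_of_ae_mem hcover
  have hmass : Tendsto (fun k => (μ (A k))⁻¹) atTop (𝓝 1) := by
    have h := (tendsto_measure_iUnion_atTop (μ := μ) hA).inv
    rwa [← Measure.restrict_apply_univ, hrestrict, measure_univ, inv_one] at h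
  have hint : Tendsto (fun k => ∫⁻ x in A k, g x ∂μ) atTop (𝓝 (∫⁻ x, g x ∂μ)) := by
    have h := tendsto_atTop_iSup (f := fun k => ∫⁻ x in A k, g x ∂μ)
      fun i j hij => lintegral_mono' (Measure.restrict_mono (hA hij) le_rfl) le_rfl
    rwa [← setLIntegral_iUnion_of_directed g hA.directed_le, hrestrict] at h
  simpa only [ProbabilityTheory.cond, lintegral_smul_measure, smul_eq_mul, one_mul] using
    ENNReal.Tendsto.mul hmass (Or.inl one_ne_zero) hint (Or.inr ENNReal.one_ne_top)

theorem cond_prod_cond {β : Type*} [MeasurableSpace β] (μ : Measure α) (ν : Measure β)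
    [IsFiniteMeasure μ] [IsFiniteMeasure ν] (s : Set α) (t : Set β) :
    (μ[|s]).prod (ν[|t]) = (μ.prod ν)[|s ×ˢ t] := by
  simp only [ProbabilityTheory.cond, Measure.prod_smul_left, Measure.prod_smul_right,
    Measure.prod_restrict, Measure.prod_prod, smul_smul]
  rw [ENNReal.mul_inv (Or.inr (measure_ne_top ν t)) (Or.inl (measure_ne_top μ s)), mul_comm]

theorem ae_mem_prod_of_ae_mem {β : Type*} [MeasurableSpace β]
    {μ : Measure α} {ν : Measure β} [SFinite ν] {s : Set α} {t : Set β}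
    (hs : ∀ᵐ x ∂μ, x ∈ s) (ht : ∀ᵐ y ∂ν, y ∈ t) : ∀ᵐ p ∂μ.prod ν, p ∈ s ×ˢ t :=
  (Measure.quasiMeasurePreserving_fst.ae hs).and (Measure.quasiMeasurePreserving_snd.ae ht)

end Conditioning

theorem EReal.tendsto_coe_ennreal_sub {ι : Type*} {l : Filter ι} {a b : ι → ℝ≥0∞} {x y : ℝ≥0∞}
    (ha : Tendsto a l (𝓝 x)) (hb : Tendsto b l (𝓝 y)) (hy : y ≠ ∞) :
    Tendsto (fun i => (a i : EReal) - b i) l (𝓝 ((x : EReal) - y)) := by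
  have hy' : -(y : EReal) ≠ ⊥ := by simpa [EReal.neg_eq_bot_iff] using hy
  have hadd := EReal.continuousAt_add (p := ((x : EReal), -(y : EReal))) (Or.inr hy')
    (Or.inl (EReal.coe_ennreal_ne_bot x))
  simp only [sub_eq_add_neg]
  exact hadd.tendsto.comp (((continuous_coe_ennreal_ereal.tendsto x).comp ha).prodMk_nhds
    ((continuous_coe_ennreal_ereal.tendsto y).comp hb).neg)

theorem EReal.posPart'_le_ofReal {a : EReal} {C : ℝ} (h : a ≤ C) :
    a.posPart' ≤ ENNReal.ofReal C := by
  induction a using EReal.rec with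
  | bot => simp [EReal.posPart']
  | top => exact absurd h (by simp)
  | coe r => simpa [EReal.posPart'] using ENNReal.ofReal_le_ofReal (EReal.coe_le_coe_iff.mp h)

section EIntegral

variable {α : Type*} [MeasurableSpace α]

theorem lintegral_posPart'_neg_ne_top {μ : Measure α} [IsFiniteMeasure μ] {f : α → EReal}
    {C : ℝ} (hf : ∀ᵐ x ∂μ, ((-C : ℝ) : EReal) ≤ f x) : ∫⁻ x, (-f x).posPart' ∂μ ≠ ∞ := by
  refine ne_top_of_le_ne_top (lintegral_const_lt_top (μ := μ) (ENNReal.ofReal_ne_top (r := C))).ne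
    (lintegral_mono_ae (hf.mono fun x hx => ?_))
  exact EReal.posPart'_le_ofReal (EReal.neg_le.mpr (by simpa using hx))

theorem tendsto_eIntegral_cond_of_monotone {μ : Measure α} [IsProbabilityMeasure μ]
    {A : ℕ → Set α} (hA : Monotone A) (hcover : ∀ᵐ x ∂μ, x ∈ ⋃ k, A k) {f : α → EReal}
    (hf : ∫⁻ x, (-f x).posPart' ∂μ ≠ ∞) :
    Tendsto (fun k => eIntegral μ[|A k] f) atTop (𝓝 (eIntegral μ f)) :=
  EReal.tendsto_coe_ennreal_sub (tendsto_lintegral_cond_of_monotone hA hcover _)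
    (tendsto_lintegral_cond_of_monotone hA hcover _) hf

end EIntegral

section LogKernel

variable {E : Type*} [SeminormedAddCommGroup E]

theorem log_dist_le_log_one_add_norm_add_log_one_add_norm (x y : E) :
    Real.log (dist x y) ≤ Real.log (1 + ‖x‖) + Real.log (1 + ‖y‖) := by
  have hx := norm_nonneg x
  have hy := norm_nonneg y
  rw [← Real.log_mul (by positivity) (by positivity)]
  rcases (dist_nonneg (x := x) (y := y)).eq_or_lt with h | h
  · rw [← h, Real.log_zero]
    exact Real.log_nonneg (by nlinarith)
  · exact Real.log_le_log h (by nlinarith [dist_le_norm_add_norm x y])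

theorem kern_coe_of_dist_ne_zero (β : ℝ) (W : E → ℝ) {x y : E} (h : dist x y ≠ 0) :
    kern β (fun z => (W z : EReal)) x y =
      ((β / 2 * -Real.log (dist x y) + 2⁻¹ * W x + 2⁻¹ * W y : ℝ) : EReal) := by
  simp only [kern, negLog, if_neg h]
  norm_cast

theorem kern_coe_of_dist_eq_zero {β : ℝ} (hβ : 0 < β) (W : E → ℝ) {x y : E}
    (h : dist x y = 0) : kern β (fun z => (W z : EReal)) x y = ⊤ := by
  simp only [kern, negLog, if_pos h, EReal.coe_mul_top_of_pos (half_pos hβ)]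
  norm_cast

theorem le_kern_of_le {β : ℝ} (hβ : 0 < β) {W : E → ℝ} {C : ℝ} {x y : E}
    (hx : β * Real.log (1 + ‖x‖) - W x ≤ C) (hy : β * Real.log (1 + ‖y‖) - W y ≤ C) :
    ((-C : ℝ) : EReal) ≤ kern β (fun z => (W z : EReal)) x y := by
  by_cases h : dist x y = 0
  · simp [kern_coe_of_dist_eq_zero hβ W h]
  · rw [kern_coe_of_dist_ne_zero β W h, EReal.coe_le_coe_iff]
    nlinarith [mul_le_mul_of_nonneg_left
      (log_dist_le_log_one_add_norm_add_log_one_add_norm x y) hβ.le]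

theorem ContinuousOn.bddAbove_image_of_le_of_norm_ge [ProperSpace E] {Δ : Set E}
    (hΔ : IsClosed Δ) {φ : E → ℝ} (hφ : ContinuousOn φ Δ) {R C : ℝ}
    (hC : ∀ x ∈ Δ, R ≤ ‖x‖ → φ x ≤ C) :
    BddAbove (φ '' Δ) := by
  obtain ⟨C', hC'⟩ := ((isCompact_closedBall 0 R).inter_left hΔ).bddAbove_image
    (hφ.mono Set.inter_subset_left)
  refine ⟨max C' C, ?_⟩
  rintro _ ⟨x, hx, rfl⟩
  rcases le_total ‖x‖ R with h | h
  · exact le_max_of_le_left (hC' ⟨x, ⟨hx, by simpa using h⟩, rfl⟩)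
  · exact le_max_of_le_right (hC x hx h)

end LogKernel

theorem eventually_atComplexInftyWithin_iff {Δ : Set ℂ} {p : ℂ → Prop} :
    (∀ᶠ x in atComplexInftyWithin Δ, p x) ↔ ∃ R, ∀ x ∈ Δ, R ≤ ‖x‖ → p x := by
  simp only [atComplexInftyWithin, eventually_inf_principal, eventually_comap, eventually_atTop]
  exact ⟨fun ⟨R, hR⟩ => ⟨R, fun x hx hxR => hR _ hxR x rfl hx⟩,
    fun ⟨R, hR⟩ => ⟨R, fun _ hb x hx hxΔ => hR x hxΔ (hx ▸ hb)⟩⟩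

theorem WeakGrowth.exists_le {β : ℝ} {Δ : Set ℂ} {V : ℂ → ℝ} (h : WeakGrowth β Δ V) :
    ∃ β' m R : ℝ, β ≤ β' ∧ ∀ x ∈ Δ, R ≤ ‖x‖ → m + β' * Real.log ‖x‖ ≤ V x := by
  obtain ⟨β', -, hββ', hlim⟩ := h
  obtain ⟨m, -, hm⟩ := EReal.exists_between_coe_real hlim
  obtain ⟨R, hR⟩ := eventually_atComplexInftyWithin_iff.mp (eventually_lt_of_lt_liminf hm)
  exact ⟨β', m, R, hββ', fun x hx hxR => by
    linarith [EReal.coe_lt_coe_iff.mp (hR x hx hxR)]⟩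

theorem WeakGrowth.bddAbove {β : ℝ} (hβ : 0 ≤ β) {Δ : Set ℂ} (hΔ : IsClosed Δ) {V : ℂ → ℝ}
    (hV : ContinuousOn V Δ) (h : WeakGrowth β Δ V) :
    BddAbove ((fun x => β * Real.log (1 + ‖x‖) - V x) '' Δ) := by
  obtain ⟨β', m, R, hββ', hR⟩ := h.exists_le
  have hcont : ContinuousOn (fun x : ℂ => β * Real.log (1 + ‖x‖) - V x) Δ :=
    ((continuous_const.mul ((continuous_const.add continuous_norm).log
      fun x => (by positivity : (0 : ℝ) < 1 + ‖x‖).ne')).continuousOn).sub hV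
  refine hcont.bddAbove_image_of_le_of_norm_ge hΔ (R := max R 1)
    (C := β * Real.log 2 - m) fun x hx hxR => ?_
  have hx1 : 1 ≤ ‖x‖ := le_of_max_le_right hxR
  have hlog : Real.log (1 + ‖x‖) ≤ Real.log 2 + Real.log ‖x‖ := by
    rw [← Real.log_mul two_ne_zero (by linarith)]
    exact Real.log_le_log (by positivity) (by linarith)
  nlinarith [hR x hx (le_of_max_le_left hxR), Real.log_nonneg hx1,
    mul_le_mul_of_nonneg_left hlog hβ]

theorem Ksq_mono : Monotone Ksq := fun _ _ hij _ hx =>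
  ⟨hx.1.trans (Nat.cast_le.mpr hij), hx.2.trans (Nat.cast_le.mpr hij)⟩

theorem iUnion_Ksq : ⋃ k, Ksq k = Set.univ :=
  Set.eq_univ_of_forall fun x => Set.mem_iUnion.mpr ⟨⌈max |x.re| |x.im|⌉₊,
    (le_max_left _ _).trans (Nat.le_ceil _), (le_max_right _ _).trans (Nat.le_ceil _)⟩

theorem truncation_convergence_general (β : ℝ) (hβ : 0 < β) (Δ : Set ℂ)
    (hΔ : Δ = Set.range (Complex.ofReal) ∨ Δ = Set.univ)
    (V : ℂ → ℝ) (hV : ContinuousOn V Δ) (hgrowth : WeakGrowth β Δ V)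
    (μ : ProbabilityMeasure ℂ) (hμ : μ ∈ M1 Δ)
    (k₀ : ℕ)
    (μk : ℕ → ProbabilityMeasure ℂ)
    (hμk : ∀ k ≥ k₀, (μk k : Measure ℂ) =
      ((μ : Measure ℂ) (Δ ∩ Ksq k))⁻¹ • (μ : Measure ℂ).restrict (Δ ∩ Ksq k)) :
    Filter.Tendsto μk Filter.atTop (nhds μ) ∧
      Filter.Tendsto
        (fun k : ℕ => energy β (fun x => ((V x : ℝ) : EReal)) (μk k : Measure ℂ))
        Filter.atTop
        (nhds (energy β (fun x => ((V x : ℝ) : EReal)) (μ : Measure ℂ))) := by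
  have hΔc : IsClosed Δ := by
    rcases hΔ with rfl | rfl
    exacts [Complex.isometry_ofReal.isClosedEmbedding.isClosed_range, isClosed_univ]
  have hμΔ : ∀ᵐ x ∂(μ : Measure ℂ), x ∈ Δ := mem_ae_iff.mpr hμ
  set A : ℕ → Set ℂ := fun k => Δ ∩ Ksq k
  have hA : Monotone A := fun _ _ hij => Set.inter_subset_inter_right Δ (Ksq_mono hij)
  have hcover : ∀ᵐ x ∂(μ : Measure ℂ), x ∈ ⋃ k, A k := by
    simpa only [A, ← Set.inter_iUnion, iUnion_Ksq, Set.inter_univ] using hμΔ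
  -- `μ[|s]` is by definition `(μ s)⁻¹ • μ.restrict s`
  have hμk_cond : ∀ᶠ k in atTop, (μk k : Measure ℂ) = (μ : Measure ℂ)[|A k] :=
    eventually_atTop.mpr ⟨k₀, hμk⟩
  refine ⟨ProbabilityMeasure.tendsto_iff_forall_lintegral_tendsto.mpr fun f =>
    (tendsto_lintegral_cond_of_monotone hA hcover _).congr' ?_, ?_⟩
  · filter_upwards [hμk_cond] with k hk
    rw [hk]
  obtain ⟨C, hC⟩ := hgrowth.bddAbove hβ.le hΔc hV
  have hbound : ∀ᵐ p ∂(μ : Measure ℂ).prod μ,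
      ((-C : ℝ) : EReal) ≤ kern β (fun x => ((V x : ℝ) : EReal)) p.1 p.2 :=
    (ae_mem_prod_of_ae_mem hμΔ hμΔ).mono fun p hp =>
      le_kern_of_le hβ (hC ⟨_, hp.1, rfl⟩) (hC ⟨_, hp.2, rfl⟩)
  have hcover₂ : ∀ᵐ p ∂(μ : Measure ℂ).prod μ, p ∈ ⋃ k, A k ×ˢ A k := by
    simpa only [Set.iUnion_prod_of_monotone hA hA] using ae_mem_prod_of_ae_mem hcover hcover
  refine (tendsto_eIntegral_cond_of_monotone (fun _ _ hij => Set.prod_mono (hA hij) (hA hij))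
    hcover₂ (lintegral_posPart'_neg_ne_top hbound)).congr' ?_
  filter_upwards [hμk_cond] with k hk
  unfold energy
  rw [hk, cond_prod_cond]

theorem truncation_convergence (β : ℝ) (hβ : 0 < β) (Δ : Set ℂ)
    (hΔ : Δ = Set.range (Complex.ofReal) ∨ Δ = Set.univ)
    (V : ℂ → ℝ) (hV : ContinuousOn V Δ) (hgrowth : WeakGrowth β Δ V)
    (μ : ProbabilityMeasure ℂ) (hμ : μ ∈ M1 Δ)
    (k₀ : ℕ) (hpos : ∀ k ≥ k₀, 0 < (μ : Measure ℂ) (Δ ∩ Ksq k))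
    (μk : ℕ → ProbabilityMeasure ℂ)
    (hμk : ∀ k ≥ k₀, (μk k : Measure ℂ) =
      ((μ : Measure ℂ) (Δ ∩ Ksq k))⁻¹ • (μ : Measure ℂ).restrict (Δ ∩ Ksq k)) :
    Filter.Tendsto μk Filter.atTop (nhds μ) ∧
      Filter.Tendsto
        (fun k : ℕ => energy β (fun x => ((V x : ℝ) : EReal)) (μk k : Measure ℂ))
        Filter.atTop
        (nhds (energy β (fun x => ((V x : ℝ) : EReal)) (μ : Measure ℂ))) :=
  truncation_convergence_general β hβ Δ hΔ V hV hgrowth μ hμ k₀ μk hμk
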